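/- (Uniqueness of Fast Finalization) With n ≥ 3f + 2p + 1 replicas, at most f' ≤ f corrupt, each honest replica casting at most one first vote: if some replica P receives f + p + 1 first votes for a block B (at most one vote counted per replica), then no block C ≠ B can be fast finalized, i.e., no block C ≠ B can receive first votes from at least n - p - f' honest replicas. -/

import Mathlib

/-!
Honest replicas cast at most one first vote, so the honest voters for `B` and for `C ≠ B` are
disjoint. If `k ≤ f'` replicas of `R` are corrupt, at least `f + p + 1 - k` of the votes for `B`
counted by `P` are honest, which leaves at most `n - f - p - 1 < n - p - f'` honest replicas
that can have voted for `C`.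
-/

open Finset

namespace Finset

variable {α : Type*} {P Q : α → Prop} [DecidablePred P] [DecidablePred Q]

lemma card_filter_add_card_filter_le_of_disjoint [DecidableEq α] {s : Finset α}
    (h : ∀ a ∈ s, P a → ¬Q a) : #(s.filter P) + #(s.filter Q) ≤ #s := by
  rw [← card_union_of_disjoint (disjoint_filter.2 h)]
  exact card_le_card (union_subset (filter_subset _ _) (filter_subset _ _))

lemma card_filter_le_card_sdiff_filter_add_card_inter [DecidableEq α] {s t : Finset α}
    (h : ∀ a ∈ s \ t, P a → Q a) : #(s.filter P) ≤ #((s \ t).filter Q) + #(s ∩ t) := by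
  calc #(s.filter P)
      ≤ #((s \ t).filter Q ∪ s ∩ t) := card_le_card fun a ha => by
        rw [mem_filter] at ha
        by_cases hat : a ∈ t
        · exact mem_union_right _ (mem_inter.2 ⟨ha.1, hat⟩)
        · have has : a ∈ s \ t := mem_sdiff.2 ⟨ha.1, hat⟩
          exact mem_union_left _ (mem_filter.2 ⟨has, h a has ha.2⟩)
    _ ≤ #((s \ t).filter Q) + #(s ∩ t) := card_union_le _ _

end Finset

theorem uniqueness_of_fast_finalization
    {α Block : Type} [DecidableEq α] [DecidableEq Block]
    (n f p f' : ℕ) (hf' : f' ≤ f)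
    (R : Finset α) (hR : R.card = n)
    (corrupt : Finset α) (hc : corrupt.card = f')
    (firstVote : α → Option Block)   -- actual first vote of each (honest) replica
    (viewP : α → Option Block)       -- the (at most one) first vote P counts per replica
    (hagree : ∀ r ∈ R \ corrupt, ∀ b : Block, viewP r = some b → firstVote r = some b)
    (B : Block)
    (hmany : ((R.filter (fun r => viewP r = some B)).card ≥ f + p + 1)) :
    ∀ C : Block, C ≠ B →
      ((R \ corrupt).filter (fun r => firstVote r = some C)).card < n - p - f' := by
  intro C hCB
  have honest_for_B := card_filter_le_card_sdiff_filter_add_card_inter (t := corrupt)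
    fun r hr => hagree r hr B
  have honest_disjoint := card_filter_add_card_filter_le_of_disjoint (s := R \ corrupt)
    fun r _ (hB : firstVote r = some B) (hC : firstVote r = some C) =>
      hCB (Option.some.inj (hC.symm.trans hB))
  have corrupt_in_R : #(R ∩ corrupt) ≤ f' := hc ▸ card_le_card inter_subset_right
  have partition := card_sdiff_add_card_inter R corrupt
  omega
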